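/- arXiv:math/0612433 — 2 statements merged into one kernel-verified Lean document; each statement's English description precedes it below -/
import Mathlib

section
/- Let 0 < p < ∞, t > 0, s > 0, and suppose there exists C ≥ 0 such that for every f ∈ L^p(ℂⁿ, dv_s) the function w ↦ e^{t⟨z,w⟩} f(w) is dv_t-integrable for a.e. z ∈ ℂⁿ and ∫_{ℂⁿ} |S_t f|^p dv_s ≤ C^p ∫_{ℂⁿ} |f|^p dv_s, where S_t f(z) = ∫_{ℂⁿ} e^{t⟨z,w⟩} f(w) dv_t(w). Then p·t ≤ 2s. -/
open MeasureTheory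

/-- `|z|² = |z₁|² + ⋯ + |zₙ|²` on `ℂⁿ`. -/
noncomputable def nsq {n : ℕ} (z : Fin n → ℂ) : ℝ := ∑ i, Complex.normSq (z i)

/-- `⟨z,w⟩ = z₁·conj w₁ + ⋯ + zₙ·conj wₙ` on `ℂⁿ`. -/
noncomputable def herm {n : ℕ} (z w : Fin n → ℂ) : ℂ := ∑ i, z i * (starRingEnd ℂ) (w i)

/-- The Gaussian probability measure `dv_t(z) = (t/π)^n e^{-t|z|²} dv(z)` on `ℂⁿ`. -/
noncomputable def gaussMeasure (n : ℕ) (t : ℝ) : Measure (Fin n → ℂ) :=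
  volume.withDensity fun z => ENNReal.ofReal ((t / Real.pi) ^ n * Real.exp (-t * nsq z))

/-- Boundedness of the operator `S_t f(z) = ∫ e^{t⟨z,w⟩} f(w) dv_t(w)` on `L^p(ℂⁿ, dv_s)`
with constant `C`: for every `f ∈ L^p(dv_s)` the integrand is `dv_t`-integrable for a.e. `z`
and `∫ |S_t f|^p dv_s ≤ C^p ∫ |f|^p dv_s`. -/
def SBounded (n : ℕ) (t s p C : ℝ) : Prop :=
  ∀ f : (Fin n → ℂ) → ℂ, MemLp f (ENNReal.ofReal p) (gaussMeasure n s) →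
    (∀ᵐ z ∂(volume : Measure (Fin n → ℂ)),
      Integrable (fun w => Complex.exp ((t : ℂ) * herm z w) * f w) (gaussMeasure n t)) ∧
    ∫⁻ z, ENNReal.ofReal
        (‖∫ w, Complex.exp ((t : ℂ) * herm z w) * f w ∂(gaussMeasure n t)‖ ^ p)
      ∂(gaussMeasure n s)
      ≤ ENNReal.ofReal (C ^ p) *
        ∫⁻ z, ENNReal.ofReal (‖f z‖ ^ p) ∂(gaussMeasure n s)

/-!
Test the bound against `f(w) = exp(θ|w₁|² + βw₁)` with `θ < 0` and `β` real. Completing the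
square in each coordinate evaluates every Gaussian integral involved in closed form:
`S_t f(z) = t/(t-θ) · exp(tβz₁/(t-θ))`, and both sides of the `L^p(dv_s)` bound become
`K · exp(A β²) ≤ R · exp(B β²)` with `A = p²t²/(4s(t-θ)²)` and `B = p²/(4(s-pθ))`. Letting
`β → ∞` forces `A ≤ B`, i.e. `t²(s - pθ) ≤ s(t-θ)²`; for `θ = -ε/s` this reads
`pt² ≤ 2st + ε`, and `ε → 0` gives `pt ≤ 2s`.
-/

open Complex ComplexConjugate
open scoped Real

namespace Complex

lemma cexp_linear_conj_sub_mul_normSq_comp_equivPi (a b γ : ℂ) (x : Fin 2 → ℝ) :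
    cexp (a * measurableEquivPi.symm x + b * conj (measurableEquivPi.symm x)
        - γ * normSq (measurableEquivPi.symm x))
      = cexp (-∑ i, γ * (x i : ℂ) ^ 2 + ∑ i, ![a + b, (a - b) * I] i * x i) := by
  congr 1
  simp only [measurableEquivPi_symm_apply, Fin.sum_univ_two, normSq_add_mul_I, map_add, map_mul,
    conj_ofReal, conj_I, Matrix.cons_val_zero, Matrix.cons_val_one]
  push_cast
  ring_nf

lemma integrable_cexp_linear_conj_sub_mul_normSq {γ : ℂ} (hγ : 0 < γ.re) (a b : ℂ) :
    Integrable fun w : ℂ => cexp (a * w + b * conj w - γ * normSq w) := by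
  rw [← volume_preserving_equiv_pi.symm.integrable_comp_emb
    measurableEquivPi.symm.measurableEmbedding]
  simp only [Function.comp_def, cexp_linear_conj_sub_mul_normSq_comp_equivPi]
  exact GaussianFourier.integrable_cexp_neg_sum_mul_add (fun _ => hγ) _

lemma integral_cexp_linear_conj_sub_mul_normSq {γ : ℂ} (hγ : 0 < γ.re) (a b : ℂ) :
    ∫ w : ℂ, cexp (a * w + b * conj w - γ * normSq w) = π / γ * cexp (a * b / γ) := by
  have hγ0 : γ ≠ 0 := fun h => by simp [h] at hγ
  rw [← volume_preserving_equiv_pi.symm.integral_comp measurableEquivPi.symm.measurableEmbedding]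
  simp only [cexp_linear_conj_sub_mul_normSq_comp_equivPi]
  rw [GaussianFourier.integral_cexp_neg_sum_mul_add (fun _ => hγ), Fin.prod_univ_two,
    mul_mul_mul_comm, ← cpow_add _ _ (div_ne_zero (ofReal_ne_zero.mpr Real.pi_ne_zero) hγ0),
    ← Complex.exp_add, show (1 / 2 + 1 / 2 : ℂ) = 1 by norm_num, cpow_one]
  congr 2
  simp only [Matrix.cons_val_zero, Matrix.cons_val_one]
  field_simp
  linear_combination (a - b) ^ 2 * I_sq

end Complex

section GaussMeasure

variable {n : ℕ} {τ : ℝ}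

@[fun_prop]
lemma continuous_nsq : Continuous (nsq (n := n)) :=
  continuous_finsetSum _ fun i _ => Complex.continuous_normSq.comp (continuous_apply i)

lemma gaussMeasure_density_nonneg (hτ : 0 ≤ τ) (z : Fin n → ℂ) :
    0 ≤ (τ / π) ^ n * Real.exp (-τ * nsq z) := by
  positivity

lemma measurable_gaussMeasure_density :
    Measurable fun z : Fin n → ℂ => ENNReal.ofReal ((τ / π) ^ n * Real.exp (-τ * nsq z)) := by
  fun_prop

lemma integral_gaussMeasure (hτ : 0 ≤ τ) (g : (Fin n → ℂ) → ℂ) :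
    ∫ z, g z ∂gaussMeasure n τ = ∫ z, ((τ / π) ^ n * Real.exp (-τ * nsq z)) • g z := by
  rw [gaussMeasure, integral_withDensity_eq_integral_toReal_smul measurable_gaussMeasure_density
    (.of_forall fun _ => ENNReal.ofReal_lt_top)]
  simp only [ENNReal.toReal_ofReal (gaussMeasure_density_nonneg hτ _)]

lemma integrable_gaussMeasure_iff (hτ : 0 ≤ τ) {g : (Fin n → ℂ) → ℂ} :
    Integrable g (gaussMeasure n τ) ↔
      Integrable fun z => ((τ / π) ^ n * Real.exp (-τ * nsq z)) • g z := by
  rw [gaussMeasure, integrable_withDensity_iff_integrable_smul' measurable_gaussMeasure_density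
    (.of_forall fun _ => ENNReal.ofReal_lt_top)]
  simp only [ENNReal.toReal_ofReal (gaussMeasure_density_nonneg hτ _)]

lemma gaussMeasure_density_smul_cexp_sum (θ α b : Fin n → ℂ) (w : Fin n → ℂ) :
    ((τ / π) ^ n * Real.exp (-τ * nsq w)) •
        cexp (∑ i, (θ i * normSq (w i) + α i * w i + b i * conj (w i)))
      = ∏ i, (τ / π : ℂ) * cexp (α i * w i + b i * conj (w i) - (τ - θ i) * normSq (w i)) := by
  rw [Finset.prod_mul_distrib, Finset.prod_const, Finset.card_univ, Fintype.card_fin,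
    ← Complex.exp_sum, Complex.real_smul, ofReal_mul, ofReal_exp, mul_assoc, ← Complex.exp_add,
    nsq]
  push_cast
  congr 2
  rw [Finset.mul_sum, ← Finset.sum_add_distrib]
  exact Finset.sum_congr rfl fun i _ => by ring

lemma integrable_cexp_sum_gaussMeasure (hτ : 0 < τ) {θ : Fin n → ℂ} (hθ : ∀ i, (θ i).re < τ)
    (α b : Fin n → ℂ) :
    Integrable (fun w => cexp (∑ i, (θ i * normSq (w i) + α i * w i + b i * conj (w i))))
      (gaussMeasure n τ) := by
  rw [integrable_gaussMeasure_iff hτ.le]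
  simp only [gaussMeasure_density_smul_cexp_sum]
  exact Integrable.fintype_prod fun i =>
    (integrable_cexp_linear_conj_sub_mul_normSq (by simpa using hθ i) _ _).const_mul _

lemma integral_cexp_sum_gaussMeasure (hτ : 0 < τ) {θ : Fin n → ℂ} (hθ : ∀ i, (θ i).re < τ)
    (α b : Fin n → ℂ) :
    ∫ w, cexp (∑ i, (θ i * normSq (w i) + α i * w i + b i * conj (w i))) ∂gaussMeasure n τ
      = ∏ i, τ / (τ - θ i) * cexp (α i * b i / (τ - θ i)) := by
  rw [integral_gaussMeasure hτ.le]
  simp only [gaussMeasure_density_smul_cexp_sum]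
  rw [integral_fintype_prod_volume_eq_prod (fun i (u : ℂ) =>
    (τ / π : ℂ) * cexp (α i * u + b i * conj u - (τ - θ i) * normSq u))]
  refine Finset.prod_congr rfl fun i _ => ?_
  rw [integral_const_mul, integral_cexp_linear_conj_sub_mul_normSq (by simpa using hθ i),
    ← mul_assoc, div_mul_div_cancel₀ (ofReal_ne_zero.mpr Real.pi_ne_zero)]

variable [NeZero n]

lemma cexp_single_add_herm_eq_cexp_sum (θ : ℝ) (α : ℂ) (b w : Fin n → ℂ) :
    cexp (θ * normSq (w 0) + α * w 0 + herm b w)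
      = cexp (∑ i, ((Pi.single 0 (θ : ℂ) : Fin n → ℂ) i * normSq (w i)
          + (Pi.single 0 α : Fin n → ℂ) i * w i + b i * conj (w i))) := by
  simp only [Finset.sum_add_distrib, herm, Pi.single_apply, ite_mul, zero_mul,
    Finset.sum_ite_eq', Finset.mem_univ, if_true]

lemma re_single_lt (hτ : 0 < τ) {θ : ℝ} (hθ : θ < τ) (i : Fin n) :
    ((Pi.single 0 (θ : ℂ) : Fin n → ℂ) i).re < τ := by
  rcases eq_or_ne i 0 with rfl | hi
  · simpa using hθ
  · simpa [Pi.single_eq_of_ne hi] using hτ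

lemma integrable_cexp_single_add_herm (hτ : 0 < τ) {θ : ℝ} (hθ : θ < τ) (α : ℂ)
    (b : Fin n → ℂ) :
    Integrable (fun w => cexp (θ * normSq (w 0) + α * w 0 + herm b w)) (gaussMeasure n τ) := by
  simp only [cexp_single_add_herm_eq_cexp_sum]
  exact integrable_cexp_sum_gaussMeasure hτ (re_single_lt hτ hθ) _ _

lemma integral_cexp_single_add_herm (hτ : 0 < τ) {θ : ℝ} (hθ : θ < τ) (α : ℂ)
    (b : Fin n → ℂ) :
    ∫ w, cexp (θ * normSq (w 0) + α * w 0 + herm b w) ∂gaussMeasure n τ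
      = τ / (τ - θ) * cexp (α * b 0 / (τ - θ)) := by
  simp only [cexp_single_add_herm_eq_cexp_sum]
  rw [integral_cexp_sum_gaussMeasure hτ (re_single_lt hτ hθ),
    Fintype.prod_eq_single 0 fun i hi => ?_]
  · simp
  · simp [Pi.single_eq_of_ne hi, ofReal_ne_zero.mpr hτ.ne']

end GaussMeasure

section TestFunction

variable {n : ℕ} [NeZero n]

noncomputable def testFun (θ β : ℝ) (w : Fin n → ℂ) : ℂ :=
  cexp (θ * normSq (w 0) + β * w 0)

lemma testFun_eq_cexp_add_herm (θ β : ℝ) (w : Fin n → ℂ) :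
    testFun θ β w = cexp (θ * normSq (w 0) + β * w 0 + herm 0 w) := by
  simp [testFun, herm]

@[fun_prop]
lemma continuous_testFun (θ β : ℝ) : Continuous (testFun (n := n) θ β) := by
  unfold testFun
  fun_prop

lemma norm_testFun (θ β : ℝ) (w : Fin n → ℂ) :
    ‖testFun θ β w‖ = Real.exp (θ * normSq (w 0) + β * (w 0).re) := by
  simp [testFun, Complex.norm_exp]

lemma norm_testFun_rpow (p θ β : ℝ) (w : Fin n → ℂ) :
    ‖testFun θ β w‖ ^ p = ‖testFun (p * θ) (p * β) w‖ := by
  rw [norm_testFun, norm_testFun, ← Real.exp_mul]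
  ring_nf

lemma ofReal_norm_testFun (θ β : ℝ) (w : Fin n → ℂ) :
    (‖testFun θ β w‖ : ℂ)
      = cexp (θ * normSq (w 0) + (β / 2 : ℝ) * w 0
          + herm (Pi.single 0 ((β / 2 : ℝ) : ℂ)) w) := by
  rw [norm_testFun, ofReal_exp]
  congr 1
  simp only [herm, Pi.single_apply, ite_mul, zero_mul, Finset.sum_ite_eq', Finset.mem_univ,
    if_true]
  push_cast
  rw [re_eq_add_conj]
  ring

variable {τ : ℝ}

lemma integrable_testFun (hτ : 0 < τ) {θ : ℝ} (hθ : θ < τ) (β : ℝ) :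
    Integrable (testFun (n := n) θ β) (gaussMeasure n τ) := by
  simp only [funext (testFun_eq_cexp_add_herm θ β)]
  exact integrable_cexp_single_add_herm hτ hθ _ _

lemma lintegral_norm_testFun (hτ : 0 < τ) {θ : ℝ} (hθ : θ < τ) (β : ℝ) :
    ∫⁻ w, ENNReal.ofReal ‖testFun (n := n) θ β w‖ ∂gaussMeasure n τ
      = ENNReal.ofReal (τ / (τ - θ) * Real.exp (β ^ 2 / (4 * (τ - θ)))) := by
  rw [← ofReal_integral_eq_lintegral_ofReal (integrable_testFun hτ hθ β).norm
    (.of_forall fun _ => norm_nonneg _)]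
  congr 1
  apply ofReal_injective
  rw [← integral_complex_ofReal]
  simp only [ofReal_norm_testFun]
  rw [integral_cexp_single_add_herm hτ hθ]
  simp only [Pi.single_eq_same]
  push_cast
  congr 2
  field_simp
  ring

lemma memLp_testFun {p : ℝ} (hp : 0 < p) (hτ : 0 < τ) {θ : ℝ} (hθ : p * θ < τ) (β : ℝ) :
    MemLp (testFun (n := n) θ β) (ENNReal.ofReal p) (gaussMeasure n τ) := by
  rw [← integrable_norm_rpow_iff (continuous_testFun θ β).aestronglyMeasurable
    (by simpa using hp) (by simp), ENNReal.toReal_ofReal hp.le]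
  simp only [norm_testFun_rpow]
  exact (integrable_testFun hτ hθ _).norm

lemma integral_cexp_herm_mul_testFun {t θ : ℝ} (ht : 0 < t) (hθ : θ < t) (β : ℝ)
    (z : Fin n → ℂ) :
    ∫ w, cexp (t * herm z w) * testFun θ β w ∂gaussMeasure n t
      = ((t / (t - θ) : ℝ) : ℂ) * testFun 0 (t * β / (t - θ)) z := by
  have hherm : ∀ w, (t : ℂ) * herm z w = herm (fun i => t * z i) w := fun w => by
    simp only [herm, Finset.mul_sum, mul_assoc]
  simp only [testFun, hherm, ← Complex.exp_add, add_comm (herm _ _)]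
  rw [integral_cexp_single_add_herm ht hθ]
  push_cast
  congr 2
  ring

end TestFunction

lemma le_of_forall_mul_exp_mul_sq_le {K R A B : ℝ} (hK : 0 < K)
    (h : ∀ x : ℝ, K * Real.exp (A * x ^ 2) ≤ R * Real.exp (B * x ^ 2)) : A ≤ B := by
  by_contra! hBA
  set y := |R| / (K * (A - B))
  have hy : 0 ≤ y := by positivity
  have hKy : K * ((A - B) * y) = |R| := by
    rw [← mul_assoc]
    exact mul_div_cancel₀ _ (by positivity)
  refine lt_irrefl (R * Real.exp (B * y)) ?_
  calc R * Real.exp (B * y) < (|R| + K) * Real.exp (B * y) := by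
        gcongr; linarith [le_abs_self R]
    _ = K * (((A - B) * y + 1) * Real.exp (B * y)) := by rw [← hKy]; ring
    _ ≤ K * (Real.exp ((A - B) * y) * Real.exp (B * y)) := by
        gcongr; exact Real.add_one_le_exp _
    _ = K * Real.exp (A * y) := by rw [← Real.exp_add]; ring_nf
    _ ≤ R * Real.exp (B * y) := by simpa [Real.sq_sqrt hy] using h √y

namespace SBounded

variable {n : ℕ} [NeZero n] {t s p C θ : ℝ}

lemma mul_exp_mul_sq_le (hS : SBounded n t s p C) (hC : 0 ≤ C) (hp : 0 < p) (ht : 0 < t)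
    (hs : 0 < s) (hθt : θ < t) (hθs : p * θ < s) (β : ℝ) :
    (t / (t - θ)) ^ p * Real.exp ((p * t / (t - θ)) ^ 2 / (4 * s) * β ^ 2)
      ≤ C ^ p * (s / (s - p * θ)) * Real.exp (p ^ 2 / (4 * (s - p * θ)) * β ^ 2) := by
  obtain ⟨-, h⟩ := hS (testFun θ β) (memLp_testFun hp hs hθs β)
  have hK : 0 < t / (t - θ) := div_pos ht (sub_pos.mpr hθt)
  have hSf : ∀ z : Fin n → ℂ,
      ‖∫ w, cexp (t * herm z w) * testFun θ β w ∂gaussMeasure n t‖ ^ p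
        = (t / (t - θ)) ^ p * ‖testFun 0 (p * (t * β / (t - θ))) z‖ := fun z => by
    rw [integral_cexp_herm_mul_testFun ht hθt, norm_mul, norm_real, Real.norm_of_nonneg hK.le,
      Real.mul_rpow hK.le (norm_nonneg _), norm_testFun_rpow, mul_zero]
  simp only [hSf, norm_testFun_rpow, ENNReal.ofReal_mul (Real.rpow_nonneg hK.le p)] at h
  rw [lintegral_const_mul _ (by fun_prop), lintegral_norm_testFun hs hs,
    lintegral_norm_testFun hs hθs, ← ENNReal.ofReal_mul (Real.rpow_nonneg hK.le p),
    ← ENNReal.ofReal_mul (Real.rpow_nonneg hC p),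
    ENNReal.ofReal_le_ofReal_iff (by positivity)] at h
  rw [sub_zero, div_self hs.ne', one_mul, ← mul_assoc] at h
  convert h using 3 <;> ring

lemma sq_mul_le (hS : SBounded n t s p C) (hC : 0 ≤ C) (hp : 0 < p) (ht : 0 < t) (hs : 0 < s)
    (hθt : θ < t) (hθs : p * θ < s) :
    t ^ 2 * (s - p * θ) ≤ s * (t - θ) ^ 2 := by
  have hθt' := sub_pos.mpr hθt
  have hθs' := sub_pos.mpr hθs
  have hexp := le_of_forall_mul_exp_mul_sq_le (by positivity)
    (hS.mul_exp_mul_sq_le hC hp ht hs hθt hθs)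
  rw [div_pow, div_div, div_le_div_iff₀ (by positivity) (by positivity)] at hexp
  exact le_of_mul_le_mul_left (by linear_combination hexp) (by positivity : 0 < 4 * p ^ 2)

end SBounded

theorem stmt3 (n : ℕ) (hn : 0 < n) (p t s : ℝ) (hp : 0 < p) (ht : 0 < t) (hs : 0 < s)
    (h : ∃ C : ℝ, 0 ≤ C ∧ SBounded n t s p C) :
    p * t ≤ 2 * s := by
  have : NeZero n := ⟨hn.ne'⟩
  obtain ⟨C, hC, hS⟩ := h
  have hε : ∀ ε > 0, p * t ^ 2 ≤ 2 * s * t + ε := by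
    intro ε hε
    obtain ⟨a, ha, rfl⟩ : ∃ a > 0, ε = s * a := ⟨ε / s, by positivity, by field_simp⟩
    have h := hS.sq_mul_le hC hp ht hs (θ := -a) (by linarith) (by nlinarith)
    exact le_of_mul_le_mul_left (by linear_combination h) ha
  have : p * t ^ 2 ≤ 2 * s * t := le_of_forall_pos_le_add hε
  nlinarith
end

section
/- Fix t > 0, 1 ≤ p < ∞, and define the kernel 𝒦(x,y) = Σ_{n=0}^∞ t^{2n} x^n y^n / (4^n (n!)²) for x, y > 0, and the integral operator A on functions on (0,∞) by A f(x) = ∫_0^∞ t e^{−(t/2)(x+y)} 𝒦(x,y) f(y) dy. If C ≥ 0 is such that for every nonnegative f ∈ L^p(0,∞) one has ∫_0^∞ |A f(x)|^p dx ≤ C^p ∫_0^∞ |f(x)|^p dx, then C ≥ 2. -/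
open MeasureTheory Set

/-- The kernel `𝒦(x,y) = Σ_{k=0}^∞ t^{2k} x^k y^k / (4^k (k!)²)`. -/
noncomputable def fockKernel (t x y : ℝ) : ℝ :=
  ∑' k : ℕ, t ^ (2 * k) * x ^ k * y ^ k / (4 ^ k * ((Nat.factorial k : ℝ)) ^ 2)

/-- The integral operator `A f(x) = ∫_0^∞ t e^{-(t/2)(x+y)} 𝒦(x,y) f(y) dy`. -/
noncomputable def opA (t : ℝ) (f : ℝ → ℝ) (x : ℝ) : ℝ :=
  ∫ y in Ioi (0 : ℝ), t * Real.exp (-(t / 2) * (x + y)) * fockKernel t x y * f y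

/-!
Test the bound on `f(y) = e^{-sy}`, `s > 0`. Expanding the kernel and integrating term by term,
`∫_0^∞ y^k e^{-uy} dy = k!/u^{k+1}` with `u = s + t/2` resums the series to an exponential:
`A f(x) = (t/u) e^{-σx}` with `σ = ts/(2u)`. Hence `‖A f‖_p^p / ‖f‖_p^p = (t/u)^p · s/σ
= (t/u)^p · 2u/t`, which tends to `2^p` as `s → 0⁺`, so `C^p ≥ 2^p`.
-/

open Real Filter
open scoped Nat

theorem integral_pow_mul_exp_neg_mul_Ioi {u : ℝ} (hu : 0 < u) (k : ℕ) :
    ∫ y in Ioi (0 : ℝ), y ^ k * exp (-(u * y)) = k ! / u ^ (k + 1) := by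
  have h := integral_rpow_mul_exp_neg_mul_Ioi (a := (k : ℝ) + 1) (by positivity) hu
  simp only [add_sub_cancel_right, rpow_natCast] at h
  rw [h, Gamma_nat_eq_factorial, one_div, inv_rpow hu.le, ← rpow_natCast u (k + 1)]
  push_cast
  ring

theorem integrableOn_pow_mul_exp_neg_mul_Ioi {u : ℝ} (hu : 0 < u) (k : ℕ) :
    IntegrableOn (fun y : ℝ => y ^ k * exp (-(u * y))) (Ioi 0) := by
  simpa using integrableOn_rpow_mul_exp_neg_mul_rpow (p := 1) (s := k)
    (neg_one_lt_zero.trans_le k.cast_nonneg) one_pos hu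

-- Absolute convergence is automatic in `ℝ`, so plain summability of the transforms suffices.
theorem integral_tsum_mul_pow_mul_exp_neg_mul_Ioi {u : ℝ} (hu : 0 < u) {c : ℕ → ℝ}
    (hc : Summable fun k => c k * (k ! / u ^ (k + 1))) :
    ∫ y in Ioi (0 : ℝ), ∑' k, c k * (y ^ k * exp (-(u * y)))
      = ∑' k, c k * (k ! / u ^ (k + 1)) := by
  have hint (k : ℕ) : IntegrableOn (fun y => c k * (y ^ k * exp (-(u * y)))) (Ioi 0) :=
    (integrableOn_pow_mul_exp_neg_mul_Ioi hu k).const_mul (c k)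
  have hnorm (k : ℕ) : ∫ y in Ioi (0 : ℝ), ‖c k * (y ^ k * exp (-(u * y)))‖
      = |c k * (k ! / u ^ (k + 1))| := by
    rw [setIntegral_congr_fun measurableSet_Ioi (g := fun y => |c k| * (y ^ k * exp (-(u * y))))
        fun y (hy : 0 < y) => by
          rw [norm_mul, Real.norm_eq_abs, norm_of_nonneg (by positivity)],
      integral_const_mul, integral_pow_mul_exp_neg_mul_Ioi hu, abs_mul,
      abs_of_pos (a := (k ! : ℝ) / u ^ (k + 1)) (by positivity)]
  rw [← integral_tsum_of_summable_integral_norm hint (by simpa only [hnorm] using hc.abs)]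
  congr with k
  rw [integral_const_mul, integral_pow_mul_exp_neg_mul_Ioi hu]

theorem opA_exp_neg_mul {t s : ℝ} (hu : 0 < s + t / 2) (x : ℝ) :
    opA t (fun y => exp (-(s * y))) x
      = t / (s + t / 2) * exp (-(t * s / (2 * (s + t / 2)) * x)) := by
  set u := s + t / 2 with hu_def
  set c : ℕ → ℝ := fun k => t * exp (-(t / 2 * x)) * (t ^ (2 * k) * x ^ k / (4 ^ k * k ! ^ 2))
  have hterm (k : ℕ) : c k * (k ! / u ^ (k + 1))
      = t * exp (-(t / 2 * x)) / u * ((t ^ 2 * x / (4 * u)) ^ k / k !) := by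
    simp only [c]
    rw [pow_mul, div_pow, mul_pow, mul_pow]
    field_simp
    ring
  have hexpand (y : ℝ) : t * exp (-(t / 2) * (x + y)) * fockKernel t x y * exp (-(s * y))
      = ∑' k, c k * (y ^ k * exp (-(u * y))) := by
    have hexp :
        exp (-(t / 2) * (x + y)) * exp (-(s * y)) = exp (-(t / 2 * x)) * exp (-(u * y)) := by
      rw [← exp_add, ← exp_add, hu_def]
      ring_nf
    rw [fockKernel, ← tsum_mul_left, ← tsum_mul_right]
    congr with k
    simp only [c]
    linear_combination (t * (t ^ (2 * k) * x ^ k * y ^ k / (4 ^ k * (k ! : ℝ) ^ 2))) * hexp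
  have hsum : Summable fun k => c k * (k ! / u ^ (k + 1)) := by
    simp_rw [hterm]
    exact (summable_pow_div_factorial _).mul_left _
  calc opA t (fun y => exp (-(s * y))) x
      = ∫ y in Ioi (0 : ℝ), ∑' k, c k * (y ^ k * exp (-(u * y))) := by simp_rw [opA, hexpand]
    _ = ∑' k, c k * (k ! / u ^ (k + 1)) := integral_tsum_mul_pow_mul_exp_neg_mul_Ioi hu hsum
    _ = t / u * (exp (-(t / 2 * x)) * exp (t ^ 2 * x / (4 * u))) := by
      simp_rw [hterm, tsum_mul_left, exp_eq_exp_ℝ, NormedSpace.exp_eq_tsum_div]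
      ring
    _ = t / u * exp (-(t * s / (2 * u) * x)) := by
      rw [← exp_add]
      congr 2
      field_simp
      ring

theorem lintegral_ofReal_rpow_abs_exp_neg_mul_Ioi {a p : ℝ} (ha : 0 < a) (hp : 0 < p) :
    ∫⁻ y in Ioi (0 : ℝ), ENNReal.ofReal (|exp (-(a * y))| ^ p)
      = ENNReal.ofReal (1 / (a * p)) := by
  have hap : 0 < a * p := by positivity
  have h (y : ℝ) : |exp (-(a * y))| ^ p = exp (-(a * p * y)) := by
    rw [abs_of_pos (exp_pos _), ← exp_mul]
    ring_nf
  have hint : IntegrableOn (fun y => exp (-(a * p * y))) (Ioi 0) := by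
    simpa using integrableOn_pow_mul_exp_neg_mul_Ioi hap 0
  have hval : ∫ y in Ioi (0 : ℝ), exp (-(a * p * y)) = 1 / (a * p) := by
    simpa using integral_pow_mul_exp_neg_mul_Ioi hap 0
  simp_rw [h]
  rw [← ofReal_integral_eq_lintegral_ofReal hint (Eventually.of_forall fun _ => (exp_pos _).le),
    hval]

theorem memLp_exp_neg_mul_Ioi {s p : ℝ} (hs : 0 < s) (hp : 0 < p) :
    MemLp (fun y => exp (-(s * y))) (ENNReal.ofReal p) (volume.restrict (Ioi 0)) := by
  refine ⟨by fun_prop, ?_⟩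
  rw [eLpNorm_eq_lintegral_rpow_enorm_toReal (by simpa using hp) ENNReal.ofReal_ne_top,
    ENNReal.toReal_ofReal hp.le]
  refine ENNReal.rpow_lt_top_of_nonneg (by positivity) (ne_of_lt ?_)
  have h (y : ℝ) : ‖exp (-(s * y))‖ₑ ^ p = ENNReal.ofReal (|exp (-(s * y))| ^ p) := by
    rw [Real.enorm_eq_ofReal_abs, ENNReal.ofReal_rpow_of_pos (abs_pos.2 (exp_pos _).ne')]
  simp_rw [h, lintegral_ofReal_rpow_abs_exp_neg_mul_Ioi hs hp]
  exact ENNReal.ofReal_lt_top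

theorem lintegral_rpow_abs_opA_exp_neg_mul {t s p : ℝ} (ht : 0 < t) (hs : 0 < s) (hp : 0 < p) :
    ∫⁻ x in Ioi (0 : ℝ), ENNReal.ofReal (|opA t (fun y => exp (-(s * y))) x| ^ p)
      = ENNReal.ofReal ((t / (s + t / 2)) ^ p * (2 * (s + t / 2) / t))
        * ∫⁻ y in Ioi (0 : ℝ), ENNReal.ofReal (|exp (-(s * y))| ^ p) := by
  have hu : 0 < s + t / 2 := by positivity
  have hσ : 0 < t * s / (2 * (s + t / 2)) := by positivity
  have h (x : ℝ) :
      ENNReal.ofReal (|t / (s + t / 2) * exp (-(t * s / (2 * (s + t / 2)) * x))| ^ p)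
        = ENNReal.ofReal ((t / (s + t / 2)) ^ p)
          * ENNReal.ofReal (|exp (-(t * s / (2 * (s + t / 2)) * x))| ^ p) := by
    rw [abs_mul, mul_rpow (abs_nonneg _) (abs_nonneg _), abs_of_pos (div_pos ht hu),
      ENNReal.ofReal_mul (by positivity)]
  simp_rw [opA_exp_neg_mul hu, h]
  rw [lintegral_const_mul' _ _ ENNReal.ofReal_ne_top,
    lintegral_ofReal_rpow_abs_exp_neg_mul_Ioi hσ hp,
    lintegral_ofReal_rpow_abs_exp_neg_mul_Ioi hs hp,
    ← ENNReal.ofReal_mul (by positivity), ← ENNReal.ofReal_mul (by positivity)]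
  congr 1
  field_simp

theorem stmt12 (t p : ℝ) (ht : 0 < t) (hp : 1 ≤ p) (C : ℝ) (hC : 0 ≤ C)
    (hbd : ∀ f : ℝ → ℝ, (∀ x, 0 ≤ f x) →
      MemLp f (ENNReal.ofReal p) (volume.restrict (Ioi (0 : ℝ))) →
      ∫⁻ x in Ioi (0 : ℝ), ENNReal.ofReal (|opA t f x| ^ p)
        ≤ ENNReal.ofReal (C ^ p) * ∫⁻ x in Ioi (0 : ℝ), ENNReal.ofReal (|f x| ^ p)) :
    2 ≤ C := by
  have hp0 : 0 < p := one_pos.trans_le hp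
  set r : ℝ → ℝ := fun s => (t / (s + t / 2)) ^ p * (2 * (s + t / 2) / t)
  have hr (s : ℝ) (hs : 0 < s) : r s ≤ C ^ p := by
    have h := hbd _ (fun y => (exp_pos _).le) (memLp_exp_neg_mul_Ioi hs hp0)
    rw [lintegral_rpow_abs_opA_exp_neg_mul ht hs hp0,
      lintegral_ofReal_rpow_abs_exp_neg_mul_Ioi hs hp0] at h
    exact (ENNReal.ofReal_le_ofReal_iff (by positivity)).1
      ((ENNReal.mul_le_mul_iff_left (by positivity) ENNReal.ofReal_ne_top).1 h)
  have hr0 : r 0 = 2 ^ p := by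
    simp only [r, zero_add]
    field_simp
  have hcont : ContinuousAt r 0 := by
    have h0 : (0 : ℝ) + t / 2 ≠ 0 := by positivity
    exact ((continuousAt_const.div (continuousAt_id.add continuousAt_const) h0).rpow_const
      (Or.inr hp0.le)).mul (by fun_prop)
  have h2C : (2 : ℝ) ^ p ≤ C ^ p := by
    rw [← hr0]
    refine le_of_tendsto (hcont.tendsto.mono_left (nhdsWithin_le_nhds (s := Ioi 0))) ?_
    filter_upwards [self_mem_nhdsWithin] with s hs using hr s hs
  exact (rpow_le_rpow_iff zero_le_two hC hp0).1 h2C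
end
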